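/- The strategy SIS does not absorb call-by-name: for the term t = (λk.k Ω)(λx.y) with pairwise distinct variables k, x, y, one has bn(t) = y and SIS(y) = y, while SIS diverges on t, i.e. there is no term N with SIS(t) = N. Consequently the composed relation SIS ∘ bn is not equal to SIS. -/
import Mathlib


/-- Pure λ-calculus terms (de Bruijn representation). -/
inductive Tm : Type
  | var : Nat → Tm
  | lam : Tm → Tm
  | app : Tm → Tm → Tm
deriving DecidableEq

/-- Shift the free variables (those ≥ `c`) of a term up by one. -/
def lift (c : Nat) : Tm → Tm
  | .var n => if n < c then .var n else .var (n + 1)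
  | .lam b => .lam (lift (c + 1) b)
  | .app m n => .app (lift c m) (lift c n)

/-- Capture-avoiding substitution `[N/k]B` (de Bruijn). -/
def subst (N : Tm) (k : Nat) : Tm → Tm
  | .var n => if n < k then .var n else if n = k then N else .var (n - 1)
  | .lam b => .lam (subst (lift 0 N) (k + 1) b)
  | .app m n => .app (subst N k m) (subst N k n)
/-- Composition of big-step relations: `(Comp s2 s1) M N` iff
    there is `P` with `s1 M P` and `s2 P N`. -/
def Comp (s2 s1 : Tm → Tm → Prop) : Tm → Tm → Prop :=
  fun M N => ∃ P, s1 M P ∧ s2 P N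

/-- The term `Ω = (λx.x x)(λx.x x)`. -/
def Omega : Tm :=
  .app (.lam (.app (.var 0) (.var 0))) (.lam (.app (.var 0) (.var 0)))
/-- Call-by-name big-step relation. -/
inductive Bn : Tm → Tm → Prop
  | var : ∀ n, Bn (.var n) (.var n)
  | lam : ∀ B, Bn (.lam B) (.lam B)
  | beta : ∀ M N B B', Bn M (.lam B) → Bn (subst N 0 B) B' → Bn (.app M N) B'
  | neu : ∀ M N M', Bn M M' → (∀ B, M' ≠ .lam B) → Bn (.app M N) (.app M' N)
/-- The strategy SIS (non-weak, non-strict, non-head) as a big-step relation. -/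
inductive SIS : Tm → Tm → Prop
  | var : ∀ n, SIS (.var n) (.var n)
  | lam : ∀ B B', SIS B B' → SIS (.lam B) (.lam B')
  | beta : ∀ M N B B', SIS M (.lam B) → SIS (subst N 0 B) B' → SIS (.app M N) B'
  | neu : ∀ M N M' N', SIS M M' → (∀ B, M' ≠ .lam B) → SIS N N' →
      SIS (.app M N) (.app M' N')

lemma sis_omega_ne : ∀ {M N : Tm}, SIS M N → M ≠ Omega := by
  intro M N h
  induction h with
  | var n => simp [Omega]
  | lam B B' _ _ => simp [Omega]
  | beta M N B B' h1 h2 ih1 ih2 =>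
    intro hM
    simp only [Omega, Tm.app.injEq] at hM
    obtain ⟨hM1, hN1⟩ := hM
    subst hM1; subst hN1
    -- invert h1 : SIS (lam (app v0 v0)) (lam B)
    cases h1 with
    | lam _ B hB =>
      -- hB : SIS (app v0 v0) B
      cases hB with
      | beta _ _ B0 _ hv _ => cases hv
      | neu _ _ M' N' hM' hne hN' =>
        cases hM'; cases hN'
        exact ih2 rfl
  | neu M N M' N' h1 hne h2 ih1 ih2 =>
    intro hM
    simp only [Omega, Tm.app.injEq] at hM
    obtain ⟨hM1, _⟩ := hM
    subst hM1
    cases h1 with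
    | lam _ B' _ => exact hne B' rfl

lemma sis_t_diverges (y : Nat) :
    ¬ ∃ N : Tm, SIS (.app (.lam (.app (.var 0) Omega)) (.lam (.var (y + 1)))) N := by
  rintro ⟨N, h⟩
  cases h with
  | beta _ _ B _ h1 h2 =>
    cases h1 with
    | lam _ _ hB =>
      cases hB with
      | beta _ _ _ _ hv _ => cases hv
      | neu _ _ _ _ _ _ hO => exact sis_omega_ne hO rfl
  | neu _ _ M' _ h1 hne _ =>
    cases h1 with
    | lam _ B' _ => exact hne B' rfl

lemma bn_t (y : Nat) :
    Bn (.app (.lam (.app (.var 0) Omega)) (.lam (.var (y + 1)))) (.var y) := by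
  apply Bn.beta _ _ (.app (.var 0) Omega) _ (Bn.lam _)
  show Bn (.app (.lam (.var (y+1))) Omega) (.var y)
  apply Bn.beta _ _ (.var (y+1)) _ (Bn.lam _)
  show Bn (.var y) (.var y)
  exact Bn.var y

/-- SIS does not absorb call-by-name: for `t = (λk.k Ω)(λx.y)`,
    `bn(t) = y` and `SIS(y) = y`, while SIS diverges on `t`;
    consequently `SIS ∘ bn ≠ SIS`. -/
theorem sis_does_not_absorb_bn :
    (∀ y : Nat,
        Bn (.app (.lam (.app (.var 0) Omega)) (.lam (.var (y + 1)))) (.var y) ∧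
        SIS (.var y) (.var y) ∧
        ¬ ∃ N : Tm,
            SIS (.app (.lam (.app (.var 0) Omega)) (.lam (.var (y + 1)))) N) ∧
    Comp SIS Bn ≠ SIS := by
  refine ⟨fun y => ⟨bn_t y, SIS.var y, sis_t_diverges y⟩, ?_⟩
  intro h
  apply sis_t_diverges 0
  exact ⟨.var 0, h ▸ ⟨.var 0, bn_t 0, SIS.var 0⟩⟩
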